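/- arXiv:1011.4490 — 3 statements merged into one kernel-verified Lean document; each statement's English description precedes it below -/
import Mathlib

section
/- Let r and h be positive integers with r < h. Then ∑_{u=1}^{r} C(2r−1, u−1)·h^u·u^{2r−u} ≤ (1/4)·(4rh)^r, where C(n,k) denotes the binomial coefficient. -/
/-- **Counting estimate used in the upper bound for `S(χ,h,r)`.**
Let `r, h` be positive integers with `r < h`. Then
`∑_{u=1}^{r} C(2r−1, u−1)·h^u·u^{2r−u} ≤ (1/4)·(4rh)^r`. -/
theorem exception_count_bound (r h : ℕ) (hr : 0 < r) (hh : 0 < h) (hrh : r < h) :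
    ∑ u ∈ Finset.Icc 1 r,
        ((Nat.choose (2 * r - 1) (u - 1) : ℝ) * (h : ℝ) ^ u * (u : ℝ) ^ (2 * r - u)) ≤
      (1/4 : ℝ) * (4 * (r : ℝ) * h) ^ r := by
  have key : ∀ u ∈ Finset.Icc 1 r,
      Nat.choose (2*r-1) (u-1) * (h^u * u^(2*r-u)) ≤ Nat.choose (2*r-1) (u-1) * (r^r * h^r) := by
    intro u hu
    simp only [Finset.mem_Icc] at hu
    apply Nat.mul_le_mul_left
    calc h^u * u^(2*r-u) ≤ h^u * r^(2*r-u) :=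
          Nat.mul_le_mul_left _ (Nat.pow_le_pow_left hu.2 _)
      _ = h^u * (r^r * r^(r-u)) := by
          rw [← pow_add, show r + (r-u) = 2*r-u from by omega]
      _ ≤ h^u * (r^r * h^(r-u)) :=
          Nat.mul_le_mul_left _ (Nat.mul_le_mul_left _ (Nat.pow_le_pow_left hrh.le _))
      _ = r^r * (h^u * h^(r-u)) := by ring
      _ = r^r * h^r := by rw [← pow_add, show u + (r-u) = r from by omega]
  have hsum : ∑ u ∈ Finset.Icc 1 r, Nat.choose (2*r-1) (u-1) * (h^u * u^(2*r-u))
      ≤ 4^(r-1) * (r^r * h^r) := by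
    calc _ ≤ ∑ u ∈ Finset.Icc 1 r, Nat.choose (2*r-1) (u-1) * (r^r * h^r) :=
        Finset.sum_le_sum key
      _ = (∑ u ∈ Finset.Icc 1 r, Nat.choose (2*r-1) (u-1)) * (r^r*h^r) := by
        rw [Finset.sum_mul]
      _ = 4^(r-1) * (r^r*h^r) := by
        congr 1
        rw [← Finset.Ico_add_one_right_eq_Icc, Finset.sum_Ico_eq_sum_range]
        have h1 : r + 1 - 1 = (r-1) + 1 := by omega
        have h2 : 2*r - 1 = 2*(r-1) + 1 := by omega
        rw [h1, h2]
        have := Nat.sum_range_choose_halfway (r-1)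
        simpa using this
  have hcast : ∑ u ∈ Finset.Icc 1 r,
        ((Nat.choose (2 * r - 1) (u - 1) : ℝ) * (h : ℝ) ^ u * (u : ℝ) ^ (2 * r - u))
      = ((∑ u ∈ Finset.Icc 1 r, Nat.choose (2*r-1) (u-1) * (h^u * u^(2*r-u)) : ℕ) : ℝ) := by
    push_cast
    apply Finset.sum_congr rfl
    intro u _
    ring
  rw [hcast]
  have hrhs : (1/4 : ℝ) * (4 * (r : ℝ) * h) ^ r
      = ((4^(r-1) * (r^r * h^r) : ℕ) : ℝ) := by
    push_cast
    rw [mul_pow, mul_pow]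
    have : (4:ℝ)^r = 4^(r-1) * 4 := by
      rw [← pow_succ]
      congr 1
      omega
    rw [this]
    ring
  rw [hrhs]
  exact_mod_cast hsum
end

section
/- Let r and h be positive integers with r < h, and let n ≥ 2. The number of tuples (m₁, …, m_{2r}) of integers with 1 ≤ m_j ≤ h for all j such that every value appearing among m₁, …, m_{2r} appears at least twice is at most (1/4)·(4rh)^r. -/
/-- **Bound on the number of exceptional tuples.**
Let `r, h` be positive integers with `r < h`, and let `n ≥ 2`. The number of tuples
`(m₁, …, m_{2r})` of integers with `1 ≤ m_j ≤ h` for all `j` such that every value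
appearing among the `m_j` appears at least twice is at most `(1/4)·(4rh)^r`. -/
theorem exceptional_tuples_bound (r h : ℕ) (hr : 0 < r) (hh : 0 < h) (hrh : r < h)
    (n : ℕ) (hn : 2 ≤ n) :
    (Set.ncard {m : Fin (2 * r) → ℤ |
        (∀ j, 1 ≤ m j ∧ m j ≤ h) ∧ ∀ j, ∃ k, k ≠ j ∧ m k = m j} : ℝ) ≤
      (1/4 : ℝ) * (4 * (r : ℝ) * h) ^ r := by
  classical
  have hN0 : 0 < 2 * r := by omega
  set z : Fin (2 * r) := ⟨0, hN0⟩ with hzdef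
  -- the equivalence class of a position
  set cls : (Fin (2*r) → ℤ) → Fin (2*r) → Finset (Fin (2*r)) :=
    fun m j => Finset.univ.filter (fun k => m k = m j) with hcls
  -- first occurrences
  set Fst : (Fin (2*r) → ℤ) → Finset (Fin (2*r)) :=
    fun m => Finset.univ.filter (fun j => ∀ k, m k = m j → j ≤ k) with hFst
  have hself : ∀ (m : Fin (2*r) → ℤ) j, j ∈ cls m j := by
    intro m j; simp [hcls]
  -- pointer to first occurrence
  set ptr : (Fin (2*r) → ℤ) → Fin (2*r) → Fin (2*r) :=
    fun m j => (cls m j).min' ⟨j, hself m j⟩ with hptr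
  have hptr_cls : ∀ (m : Fin (2*r) → ℤ) j, ptr m j ∈ cls m j := by
    intro m j; exact (cls m j).min'_mem _
  have hptr_val : ∀ (m : Fin (2*r) → ℤ) j, m (ptr m j) = m j := by
    intro m j
    have := hptr_cls m j
    simpa [hcls] using this
  have hptr_fst : ∀ (m : Fin (2*r) → ℤ) j, ptr m j ∈ Fst m := by
    intro m j
    simp only [hFst, Finset.mem_filter, Finset.mem_univ, true_and]
    intro k hk
    have hk' : k ∈ cls m j := by simp [hcls, hk.trans (hptr_val m j)]
    exact (cls m j).min'_le k hk'
  have hptr_id : ∀ (m : Fin (2*r) → ℤ) j, j ∈ Fst m → ptr m j = j := by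
    intro m j hj
    have h1 : ptr m j ≤ j := (cls m j).min'_le j (hself m j)
    have h2 : j ≤ ptr m j := by
      simp only [hFst, Finset.mem_filter, Finset.mem_univ, true_and] at hj
      exact hj _ (hptr_val m j)
    exact le_antisymm h1 h2
  set wv : (Fin (2*r) → ℤ) → Fin (2*r) → ℤ :=
    fun m j => if j ∈ Fst m then m j else 1 with hwv
  set A : Finset (Finset (Fin (2*r))) :=
    Finset.univ.filter (fun F => z ∈ F ∧ F.card ≤ r) with hA
  set T : Finset (Σ _ : Finset (Fin (2*r)), (Fin (2*r) → Fin (2*r)) × (Fin (2*r) → ℤ)) :=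
    A.sigma (fun F => (Fintype.piFinset fun j => if j ∈ F then {j} else F) ×ˢ
      (Fintype.piFinset fun j => if j ∈ F then Finset.Icc (1:ℤ) (h:ℤ) else {1})) with hT
  set S : Set (Fin (2*r) → ℤ) := {m : Fin (2 * r) → ℤ |
        (∀ j, 1 ≤ m j ∧ m j ≤ h) ∧ ∀ j, ∃ k, k ≠ j ∧ m k = m j} with hS
  set enc : (Fin (2*r) → ℤ) → (Σ _ : Finset (Fin (2*r)), (Fin (2*r) → Fin (2*r)) × (Fin (2*r) → ℤ)) :=
    fun m => ⟨Fst m, ptr m, wv m⟩ with henc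
  -- the encoding maps S into T
  have hmaps : ∀ m ∈ S, enc m ∈ T := by
    rintro m ⟨hm1, hm2⟩
    simp only [hT, henc, Finset.mem_sigma, Finset.mem_product]
    refine ⟨?_, ?_, ?_⟩
    · -- Fst m ∈ A
      simp only [hA, Finset.mem_filter, Finset.mem_univ, true_and]
      constructor
      · simp only [hFst, Finset.mem_filter, Finset.mem_univ, true_and]
        intro k _
        simp [hzdef, Fin.le_def]
      · -- card bound
        have hdisj : (↑(Fst m) : Set (Fin (2*r))).PairwiseDisjoint (cls m) := by
          intro a ha b hb hab
          simp only [hFst, Finset.mem_coe, Finset.mem_filter, Finset.mem_univ, true_and] at ha hb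
          refine Finset.disjoint_left.mpr ?_
          intro k hka hkb
          simp only [hcls, Finset.mem_filter, Finset.mem_univ, true_and] at hka hkb
          have hval : m a = m b := hka.symm.trans hkb
          exact hab (le_antisymm (ha b hval.symm) (hb a hval))
        have hcard2 : ∀ j ∈ Fst m, 2 ≤ (cls m j).card := by
          intro j _
          obtain ⟨k, hk, hkv⟩ := hm2 j
          have hsub : ({k, j} : Finset (Fin (2*r))) ⊆ cls m j := by
            intro x hx
            simp only [Finset.mem_insert, Finset.mem_singleton] at hx
            rcases hx with rfl | rfl
            · simp [hcls, hkv]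
            · exact hself m x
          calc 2 = ({k, j} : Finset (Fin (2*r))).card := (Finset.card_pair hk).symm
            _ ≤ (cls m j).card := Finset.card_le_card hsub
        have hbiu : ((Fst m).biUnion (cls m)).card ≤ 2 * r := by
          calc ((Fst m).biUnion (cls m)).card ≤ (Finset.univ : Finset (Fin (2*r))).card :=
                Finset.card_le_card (Finset.subset_univ _)
            _ = 2 * r := by simp
        rw [Finset.card_biUnion hdisj] at hbiu
        have hsum : 2 * (Fst m).card ≤ ∑ j ∈ Fst m, (cls m j).card := by
          calc 2 * (Fst m).card = ∑ _j ∈ Fst m, 2 := by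
                rw [Finset.sum_const, smul_eq_mul, mul_comm]
            _ ≤ ∑ j ∈ Fst m, (cls m j).card := Finset.sum_le_sum hcard2
        omega
    · -- pointer membership
      rw [Fintype.mem_piFinset]
      intro j
      by_cases hj : j ∈ Fst m
      · simp [hj, hptr_id m j hj]
      · simp [hj, hptr_fst m j]
    · -- value membership
      rw [Fintype.mem_piFinset]
      intro j
      by_cases hj : j ∈ Fst m
      · simp only [hwv, hj, if_pos, if_true, Finset.mem_Icc]
        exact hm1 j
      · simp [hwv, hj]
  -- the encoding is injective on S
  have hinj : Set.InjOn enc S := by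
    intro m hm m' hm' he
    have hp : ptr m = ptr m' :=
      congrArg (fun x : (Σ _ : Finset (Fin (2*r)), (Fin (2*r) → Fin (2*r)) × (Fin (2*r) → ℤ)) =>
        x.2.1) he
    have hw : wv m = wv m' :=
      congrArg (fun x : (Σ _ : Finset (Fin (2*r)), (Fin (2*r) → Fin (2*r)) × (Fin (2*r) → ℤ)) =>
        x.2.2) he
    funext j
    have h1 : m j = wv m (ptr m j) := by
      rw [hwv]; simp only [hptr_fst m j, if_pos, if_true]
      exact (hptr_val m j).symm
    have h2 : m' j = wv m' (ptr m' j) := by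
      rw [hwv]; simp only [hptr_fst m' j, if_pos, if_true]
      exact (hptr_val m' j).symm
    rw [h1, h2, ← hp, ← hw]
  -- counting the set of admissible first-occurrence sets
  have hAcard : A.card ≤ 4 ^ (r - 1) := by
    obtain ⟨v, hv⟩ : ∃ v, r = v + 1 := ⟨r - 1, by omega⟩
    set B : Finset (Finset (Fin (2*r))) :=
      (Finset.range r).biUnion (fun t => Finset.powersetCard t (Finset.univ.erase z)) with hB
    have h1 : A.card ≤ B.card := by
      apply Finset.card_le_card_of_injOn (fun F => F.erase z)
      · intro F hF
        simp only [hA, Finset.mem_coe, Finset.mem_filter, Finset.mem_univ, true_and] at hF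
        simp only [hB, Finset.mem_coe, Finset.mem_biUnion, Finset.mem_range]
        refine ⟨(F.erase z).card, ?_, ?_⟩
        · rw [Finset.card_erase_of_mem hF.1]; omega
        · rw [Finset.mem_powersetCard]
          exact ⟨Finset.erase_subset_erase z (Finset.subset_univ F), rfl⟩
      · intro F hF F' hF' hee
        simp only [hA, Finset.mem_coe, Finset.mem_filter, Finset.mem_univ, true_and] at hF hF'
        rw [← Finset.insert_erase hF.1, ← Finset.insert_erase hF'.1]
        simp only at hee
        rw [hee]
    have h3 : ((Finset.univ : Finset (Fin (2*r))).erase z).card = 2 * v + 1 := by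
      rw [Finset.card_erase_of_mem (Finset.mem_univ z)]
      simp only [Finset.card_univ, Fintype.card_fin]
      omega
    have h2 : B.card ≤ ∑ t ∈ Finset.range r, (2 * v + 1).choose t := by
      calc B.card ≤ ∑ t ∈ Finset.range r, (Finset.powersetCard t (Finset.univ.erase z)).card :=
            Finset.card_biUnion_le
        _ = _ := by simp [Finset.card_powersetCard, h3]
    have h4 : ∑ t ∈ Finset.range r, (2 * v + 1).choose t = 4 ^ v := by
      rw [hv]
      exact Nat.sum_range_choose_halfway v
    have h5 : r - 1 = v := by omega
    rw [h5]
    omega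
  have hTcard : T.card ≤ 4 ^ (r - 1) * (r ^ r * h ^ r) := by
    have hper : ∀ F ∈ A,
        ((Fintype.piFinset fun j => if j ∈ F then ({j} : Finset (Fin (2*r))) else F) ×ˢ
          (Fintype.piFinset fun j => if j ∈ F then Finset.Icc (1:ℤ) (h:ℤ) else {1})).card
          ≤ r ^ r * h ^ r := by
      intro F hF
      simp only [hA, Finset.mem_filter, Finset.mem_univ, true_and] at hF
      obtain ⟨hzF, hFr⟩ := hF
      have hs1 : 1 ≤ F.card := Finset.card_pos.mpr ⟨z, hzF⟩
      rw [Finset.card_product, Fintype.card_piFinset, Fintype.card_piFinset,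
        ← Finset.prod_mul_distrib]
      have hfac : ∀ j : Fin (2*r),
          ((if j ∈ F then ({j} : Finset (Fin (2*r))) else F).card *
           (if j ∈ F then Finset.Icc (1:ℤ) (h:ℤ) else {1}).card)
          = if j ∈ F then h else F.card := by
        intro j
        by_cases hj : j ∈ F
        · simp only [hj, if_true, Finset.card_singleton, one_mul, Int.card_Icc]
          omega
        · simp [hj]
      rw [Finset.prod_congr rfl (fun j _ => hfac j)]
      rw [← Finset.prod_mul_prod_compl F]
      have hFpart : ∏ j ∈ F, (if j ∈ F then h else F.card) = h ^ F.card := by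
        rw [Finset.prod_congr rfl (fun j hj => if_pos hj), Finset.prod_const]
      have hFcpart : ∏ j ∈ Fᶜ, (if j ∈ F then h else F.card) = F.card ^ (2 * r - F.card) := by
        rw [Finset.prod_congr rfl (fun j hj => if_neg (Finset.mem_compl.mp hj)),
          Finset.prod_const, Finset.card_compl]
        simp
      rw [hFpart, hFcpart]
      -- numeric bound: h^s * s^(2r-s) ≤ r^r * h^r for 1 ≤ s ≤ r ≤ h
      have hsr : F.card ≤ r := hFr
      have hrh' : r ≤ h := by omega
      have hexp1 : 2 * r - F.card = r + (r - F.card) := by omega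
      have hexp2 : F.card + (r - F.card) = r := by omega
      calc h ^ F.card * F.card ^ (2 * r - F.card)
          ≤ h ^ F.card * r ^ (2 * r - F.card) :=
            Nat.mul_le_mul_left _ (Nat.pow_le_pow_left hsr _)
        _ = h ^ F.card * (r ^ r * r ^ (r - F.card)) := by rw [hexp1, pow_add]
        _ ≤ h ^ F.card * (r ^ r * h ^ (r - F.card)) :=
            Nat.mul_le_mul_left _ (Nat.mul_le_mul_left _ (Nat.pow_le_pow_left hrh' _))
        _ = r ^ r * (h ^ F.card * h ^ (r - F.card)) := by ring
        _ = r ^ r * h ^ r := by rw [← pow_add, hexp2]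
    calc T.card = ∑ F ∈ A,
          ((Fintype.piFinset fun j => if j ∈ F then ({j} : Finset (Fin (2*r))) else F) ×ˢ
          (Fintype.piFinset fun j => if j ∈ F then Finset.Icc (1:ℤ) (h:ℤ) else {1})).card := by
          rw [hT, Finset.card_sigma]
      _ ≤ ∑ _F ∈ A, r ^ r * h ^ r := Finset.sum_le_sum hper
      _ = A.card * (r ^ r * h ^ r) := by rw [Finset.sum_const, smul_eq_mul]
      _ ≤ 4 ^ (r - 1) * (r ^ r * h ^ r) := Nat.mul_le_mul_right _ hAcard
  -- put things together
  have hmain : S.ncard ≤ 4 ^ (r - 1) * (r ^ r * h ^ r) := by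
    calc S.ncard ≤ (↑T : Set _).ncard :=
          Set.ncard_le_ncard_of_injOn enc hmaps hinj T.finite_toSet
      _ = T.card := Set.ncard_coe_finset T
      _ ≤ _ := hTcard
  calc (S.ncard : ℝ) ≤ ((4 ^ (r - 1) * (r ^ r * h ^ r) : ℕ) : ℝ) := by exact_mod_cast hmain
    _ = (1/4 : ℝ) * (4 * (r : ℝ) * h) ^ r := by
        have h4 : (4 : ℝ) ^ r = 4 ^ (r - 1) * 4 := by
          rw [← pow_succ]
          congr 1
          omega
        push_cast
        rw [mul_pow, mul_pow, h4]
        ring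
end

section
/- Let X ≥ 1 be a real number and let a ≥ 1 be an integer. Then ∑_{m ≤ X, gcd(m,a)=1} μ(m)/m² ≥ 6/π² − 1/X − 1/X², where the sum is over positive integers m ≤ X coprime to a. -/
open Real
open scoped ArithmeticFunction
open scoped ArithmeticFunction.Moebius

/-- The restricted Möbius summand. -/
noncomputable def mcs (a : ℕ) : ℕ → ℝ :=
  fun n => if Nat.Coprime n a then (μ n : ℝ) / (n : ℝ) ^ 2 else 0

lemma mcs_abs_le (a n : ℕ) : |mcs a n| ≤ 1 / (n : ℝ) ^ 2 := by
  rcases eq_or_ne n 0 with rfl | hn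
  · simp [mcs]
  unfold mcs
  split
  · rw [abs_div, abs_pow, Nat.abs_cast]
    gcongr
    calc |(μ n : ℝ)| = ((|μ n| : ℤ) : ℝ) := by push_cast; ring
      _ ≤ 1 := by exact_mod_cast ArithmeticFunction.abs_moebius_le_one
  · rw [abs_zero]; positivity

lemma mcs_summable (a : ℕ) : Summable (mcs a) := by
  apply Summable.of_norm_bounded (g := fun n : ℕ => 1 / (n : ℝ) ^ 2)
  · exact Real.summable_one_div_nat_pow.mpr one_lt_two
  · intro n; exact mcs_abs_le a n

lemma mcs_one_tsum : ∑' n, mcs 1 n = 6 / π ^ 2 := by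
  have h2 : (1 : ℝ) < (2 : ℂ).re := by norm_num
  have hμ : LSeries (fun n => (μ n : ℂ)) 2 = 6 / (π : ℂ) ^ 2 := by
    have h := ArithmeticFunction.LSeries_zeta_mul_Lseries_moebius (s := 2) h2
    rw [ArithmeticFunction.LSeries_zeta_eq_riemannZeta h2, riemannZeta_two] at h
    have hπ : (π : ℂ) ≠ 0 := by exact_mod_cast Real.pi_ne_zero
    field_simp at h ⊢
    linear_combination h
  have hterm : ∀ n : ℕ, LSeries.term (fun n => (μ n : ℂ)) 2 n = ((mcs 1 n : ℝ) : ℂ) := by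
    intro n
    rcases eq_or_ne n 0 with rfl | hn
    · simp [mcs]
    · rw [LSeries.term_of_ne_zero hn, mcs]
      rw [if_pos (Nat.coprime_one_right n)]
      rw [show (2 : ℂ) = ((2 : ℕ) : ℂ) by norm_num, Complex.cpow_natCast]
      push_cast
      ring
  have key : ((∑' n, mcs 1 n : ℝ) : ℂ) = ((6 / π ^ 2 : ℝ) : ℂ) := by
    rw [Complex.ofReal_tsum]
    have : ∑' n, ((mcs 1 n : ℝ) : ℂ) = LSeries (fun n => (μ n : ℂ)) 2 := by
      unfold LSeries
      exact tsum_congr fun n => (hterm n).symm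
    rw [this, hμ]
    push_cast
    ring
  exact_mod_cast key

/-- Key step: removing a prime from the modulus scales the sum by `1 - 1/p²`. -/
lemma mcs_step {p c : ℕ} (hp : p.Prime) (hpc : ¬ p ∣ c) :
    ∑' n, mcs c n = (1 - 1 / (p : ℝ) ^ 2) * ∑' n, mcs (p * c) n := by
  have hp2 : 2 ≤ p := hp.two_le
  have hdecomp : ∀ n, mcs c n = mcs (p * c) n + (if p ∣ n then mcs c n else 0) := by
    intro n
    by_cases h : p ∣ n
    · have h0 : ¬ Nat.Coprime n (p * c) := by
        intro hcop
        have hnp : Nat.Coprime n p := (Nat.coprime_mul_iff_right.mp hcop).1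
        have : p = 1 := Nat.eq_one_of_dvd_one (hnp ▸ Nat.dvd_gcd h dvd_rfl)
        omega
      simp [mcs, h0, h]
    · have hnp : Nat.Coprime n p := Nat.coprime_comm.mp (hp.coprime_iff_not_dvd.mpr h)
      have : Nat.Coprime n (p * c) ↔ Nat.Coprime n c := by
        rw [Nat.coprime_mul_iff_right]
        exact and_iff_right hnp
      simp only [mcs, this, if_neg h, add_zero]
  have hsum_pc := mcs_summable (p * c)
  have hsum_c := mcs_summable c
  have hg : Summable (fun n => if p ∣ n then mcs c n else 0) := by
    apply Summable.of_norm_bounded (g := fun n : ℕ => 1 / (n : ℝ) ^ 2)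
    · exact Real.summable_one_div_nat_pow.mpr one_lt_two
    · intro n
      rw [Real.norm_eq_abs]
      split
      · exact mcs_abs_le c n
      · rw [abs_zero]; positivity
  have hmul : ∀ m : ℕ, (if p ∣ p * m then mcs c (p * m) else 0)
      = -(1 / (p : ℝ) ^ 2) * mcs (p * c) m := by
    intro m
    rw [if_pos (Dvd.intro m rfl)]
    by_cases hm : Nat.Coprime m (p * c)
    · have hmp : Nat.Coprime m p := (Nat.coprime_mul_iff_right.mp hm).1
      have hmc : Nat.Coprime m c := (Nat.coprime_mul_iff_right.mp hm).2
      have hcop : Nat.Coprime (p * m) c := by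
        rw [Nat.coprime_mul_iff_left]
        exact ⟨hp.coprime_iff_not_dvd.mpr hpc, hmc⟩
      have hμpm : (μ (p * m) : ℝ) = -(μ m : ℝ) := by
        rw [ArithmeticFunction.isMultiplicative_moebius.map_mul_of_coprime hmp.symm,
          ArithmeticFunction.moebius_apply_prime hp]
        push_cast; ring
      have hp0 : (p : ℝ) ≠ 0 := by positivity
      have hm0 : m ≠ 0 := by
        rintro rfl
        have h1 := (Nat.coprime_zero_left _).mp hm
        have : p ≤ 1 := Nat.le_of_dvd Nat.one_pos (h1 ▸ dvd_mul_right p c)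
        omega
      have hm0' : (m : ℝ) ≠ 0 := Nat.cast_ne_zero.mpr hm0
      simp only [mcs, if_pos hcop, if_pos hm, hμpm]
      push_cast
      rw [mul_pow]
      field_simp
    · rw [mcs, mcs]
      simp only [if_neg hm]
      by_cases hpm : p ∣ m
      · have hns : ¬ Squarefree (p * m) := fun hsq =>
          (Nat.squarefree_iff_prime_squarefree.mp hsq p hp)
            (Nat.mul_dvd_mul_left p hpm)
        simp [ArithmeticFunction.moebius_eq_zero_of_not_squarefree hns]
      · have hmc : ¬ Nat.Coprime m c := by
          intro h'
          exact hm (Nat.coprime_mul_iff_right.mpr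
            ⟨Nat.coprime_comm.mp (hp.coprime_iff_not_dvd.mpr hpm), h'⟩)
        have hnc : ¬ Nat.Coprime (p * m) c := fun h' =>
          hmc (Nat.Coprime.coprime_dvd_left (dvd_mul_left m p) h')
        rw [if_neg hnc, mul_zero]
  have hinj : Function.Injective (fun m : ℕ => p * m) :=
    fun x y hxy => by
      simpa [Nat.mul_left_cancel_iff (by omega : 0 < p)] using hxy
  have hsupp : Function.support (fun n => if p ∣ n then mcs c n else 0)
      ⊆ Set.range (fun m : ℕ => p * m) := by
    intro n hn
    by_cases h : p ∣ n
    · obtain ⟨m, rfl⟩ := h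
      exact ⟨m, rfl⟩
    · simp [h] at hn
  have htail : ∑' n, (if p ∣ n then mcs c n else 0) = -(1 / (p : ℝ) ^ 2) * ∑' n, mcs (p * c) n := by
    rw [← Function.Injective.tsum_eq hinj hsupp]
    calc ∑' m, (if p ∣ p * m then mcs c (p * m) else 0)
        = ∑' m, -(1 / (p : ℝ) ^ 2) * mcs (p * c) m := tsum_congr hmul
      _ = -(1 / (p : ℝ) ^ 2) * ∑' n, mcs (p * c) n := tsum_mul_left
  calc ∑' n, mcs c n = ∑' n, (mcs (p * c) n + (if p ∣ n then mcs c n else 0)) :=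
        tsum_congr hdecomp
    _ = (∑' n, mcs (p * c) n) + ∑' n, (if p ∣ n then mcs c n else 0) := Summable.tsum_add hsum_pc hg
    _ = (1 - 1 / (p : ℝ) ^ 2) * ∑' n, mcs (p * c) n := by rw [htail]; ring

lemma mcs_tsum_ge : ∀ a : ℕ, 1 ≤ a → 6 / π ^ 2 ≤ ∑' n, mcs a n := by
  intro a
  induction a using Nat.strong_induction_on with
  | _ a ih =>
    intro ha
    rcases eq_or_lt_of_le ha with h1 | h1
    · rw [← h1, mcs_one_tsum]
    · set p := a.minFac with hpdef
      have hp : p.Prime := Nat.minFac_prime (by omega)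
      have ha0 : a ≠ 0 := by omega
      have hpd : p ∣ a := Nat.minFac_dvd a
      have hk : 0 < a.factorization p := hp.factorization_pos_of_dvd ha0 hpd
      set c := ordCompl[p] a with hc
      have hpc : ¬ p ∣ c := Nat.not_dvd_ordCompl hp ha0
      have hc1 : 1 ≤ c := Nat.ordCompl_pos p ha0
      have hclt : c < a := by
        apply Nat.div_lt_self (by omega)
        exact Nat.one_lt_pow hk.ne' hp.one_lt
      have hiff : ∀ n, Nat.Coprime n a ↔ Nat.Coprime n (p * c) := by
        intro n
        conv_lhs => rw [← Nat.ordProj_mul_ordCompl_eq_self a p]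
        rw [Nat.coprime_mul_iff_right, Nat.coprime_mul_iff_right,
          Nat.coprime_pow_right_iff hk]
      have hfa : mcs a = mcs (p * c) := by
        funext n
        simp only [mcs, hiff n]
      have hkey := mcs_step hp hpc
      have hSc := ih c hclt hc1
      set S := ∑' n, mcs (p * c) n with hS
      have h1' : 6 / π ^ 2 ≤ (1 - 1 / (p : ℝ) ^ 2) * S := by
        rw [← hkey]; exact hSc
      have hp2 : (2 : ℝ) ≤ (p : ℝ) := by exact_mod_cast hp.two_le
      have ht0 : 0 < 1 - 1 / (p : ℝ) ^ 2 := by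
        have : 1 / (p : ℝ) ^ 2 ≤ 1 / 4 := by
          apply one_div_le_one_div_of_le (by norm_num)
          nlinarith
        linarith
      have hpos : (0 : ℝ) < 6 / π ^ 2 := by positivity
      have hS0 : 0 < S := by nlinarith
      have ht1 : 0 ≤ 1 / (p : ℝ) ^ 2 := by positivity
      rw [hfa]
      nlinarith

lemma tail_sq (N : ℕ) :
    ∑' n : ℕ, (1 : ℝ) / ((n : ℝ) + (N : ℝ) + 1) ^ 2
      ≤ 1 / ((N : ℝ) + 1) + 1 / ((N : ℝ) + 1) ^ 2 := by
  have hgsum : Summable (fun n : ℕ => (1 : ℝ) / ((n : ℝ) + (N : ℝ) + 1) ^ 2) := by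
    have h2 : Summable (fun n : ℕ => (1 : ℝ) / (((n + (N + 1) : ℕ)) : ℝ) ^ 2) :=
      (summable_nat_add_iff (f := fun n : ℕ => (1:ℝ)/(n:ℝ)^2) (N + 1)).mpr (Real.summable_one_div_nat_pow.mpr one_lt_two)
    convert h2 using 2 with n
    push_cast
    ring
  apply Summable.tsum_le_of_sum_range_le hgsum
  intro K
  cases K with
  | zero => simp; positivity
  | succ K =>
    rw [Finset.sum_range_succ']
    have h0 : (1 : ℝ) / (((0 : ℕ) : ℝ) + (N : ℝ) + 1) ^ 2 = 1 / ((N : ℝ) + 1) ^ 2 := by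
      norm_num
    rw [h0]
    have hstep : ∀ i ∈ Finset.range K,
        (1 : ℝ) / ((((i + 1 : ℕ)) : ℝ) + (N : ℝ) + 1) ^ 2
          ≤ 1 / ((i : ℝ) + (N : ℝ) + 1) - 1 / (((i + 1 : ℕ) : ℝ) + (N : ℝ) + 1) := by
      intro i _
      have hx : (0 : ℝ) < (i : ℝ) + (N : ℝ) + 1 := by positivity
      push_cast
      rw [show 1 / ((i : ℝ) + (N : ℝ) + 1) - 1 / ((i : ℝ) + 1 + (N : ℝ) + 1)
          = 1 / (((i : ℝ) + (N : ℝ) + 1) * ((i : ℝ) + 1 + (N : ℝ) + 1)) by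
        field_simp; ring]
      apply one_div_le_one_div_of_le (by positivity)
      nlinarith
    have htel : ∑ i ∈ Finset.range K,
        ((1 : ℝ) / ((i : ℝ) + (N : ℝ) + 1) - 1 / (((i + 1 : ℕ) : ℝ) + (N : ℝ) + 1))
        = 1 / ((0 : ℝ) + (N : ℝ) + 1) - 1 / ((K : ℝ) + (N : ℝ) + 1) := by
      have := Finset.sum_range_sub' (fun i : ℕ => (1 : ℝ) / ((i : ℝ) + (N : ℝ) + 1)) K
      simpa using this
    have hsum_le : ∑ i ∈ Finset.range K,
        (1 : ℝ) / ((((i + 1 : ℕ)) : ℝ) + (N : ℝ) + 1) ^ 2 ≤ 1 / ((N : ℝ) + 1) := by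
      calc ∑ i ∈ Finset.range K, (1 : ℝ) / ((((i + 1 : ℕ)) : ℝ) + (N : ℝ) + 1) ^ 2
          ≤ ∑ i ∈ Finset.range K,
            ((1 : ℝ) / ((i : ℝ) + (N : ℝ) + 1) - 1 / (((i + 1 : ℕ) : ℝ) + (N : ℝ) + 1)) :=
            Finset.sum_le_sum hstep
        _ = 1 / ((0 : ℝ) + (N : ℝ) + 1) - 1 / ((K : ℝ) + (N : ℝ) + 1) := htel
        _ ≤ 1 / ((N : ℝ) + 1) := by
            have : (0 : ℝ) ≤ 1 / ((K : ℝ) + (N : ℝ) + 1) := by positivity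
            rw [zero_add]
            linarith
    linarith

/-- **Truncated restricted Möbius sum lower bound.**
For real `X ≥ 1` and integer `a ≥ 1`,
`∑_{m ≤ X, gcd(m,a)=1} μ(m)/m² ≥ 6/π² − 1/X − 1/X²`. -/
theorem moebius_coprime_truncated_sum (X : ℝ) (hX : 1 ≤ X) (a : ℕ) (ha : 1 ≤ a) :
    6 / π ^ 2 - 1 / X - 1 / X ^ 2 ≤
      ∑ m ∈ (Finset.Icc 1 ⌊X⌋₊).filter (fun m => Nat.Coprime m a),
        (μ m : ℝ) / (m : ℝ) ^ 2 := by
  set N := ⌊X⌋₊ with hNdef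
  have hX0 : (0 : ℝ) < X := by linarith
  have hN1 : 1 ≤ N := Nat.le_floor (by exact_mod_cast hX)
  have hXlt : X < (N : ℝ) + 1 := Nat.lt_floor_add_one X
  have hfin : ∑ m ∈ (Finset.Icc 1 N).filter (fun m => Nat.Coprime m a),
      (μ m : ℝ) / (m : ℝ) ^ 2 = ∑ m ∈ Finset.range (N + 1), mcs a m := by
    rw [Finset.sum_filter]
    apply Finset.sum_subset
    · intro m hm
      rw [Finset.mem_Icc] at hm
      rw [Finset.mem_range]
      omega
    · intro m hm hnm
      rw [Finset.mem_range] at hm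
      rw [Finset.mem_Icc] at hnm
      have : m = 0 := by omega
      subst this
      simp [mcs]
  have hsum := mcs_summable a
  have hsplit := Summable.sum_add_tsum_nat_add (f := mcs a) (N + 1) hsum
  have hge := mcs_tsum_ge a ha
  have hshift : Summable (fun i : ℕ => mcs a (i + (N + 1))) :=
    (summable_nat_add_iff (f := mcs a) (N + 1)).mpr hsum
  have hgsum : Summable (fun n : ℕ => (1 : ℝ) / ((n : ℝ) + (N : ℝ) + 1) ^ 2) := by
    have h2 : Summable (fun n : ℕ => (1 : ℝ) / (((n + (N + 1) : ℕ)) : ℝ) ^ 2) :=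
      (summable_nat_add_iff (f := fun n : ℕ => (1:ℝ)/(n:ℝ)^2) (N + 1)).mpr (Real.summable_one_div_nat_pow.mpr one_lt_two)
    convert h2 using 2 with n
    push_cast
    ring
  have hb : ∀ n : ℕ, |mcs a (n + (N + 1))| ≤ (1 : ℝ) / ((n : ℝ) + (N : ℝ) + 1) ^ 2 := by
    intro n
    have h := mcs_abs_le a (n + (N + 1))
    convert h using 2
    push_cast
    ring
  have htail : |∑' i : ℕ, mcs a (i + (N + 1))| ≤ 1 / ((N : ℝ) + 1) + 1 / ((N : ℝ) + 1) ^ 2 := by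
    calc |∑' i : ℕ, mcs a (i + (N + 1))| ≤ ∑' i : ℕ, |mcs a (i + (N + 1))| := by
          simpa [Real.norm_eq_abs] using norm_tsum_le_tsum_norm (f := fun i : ℕ => mcs a (i + (N + 1)))
            (by simpa [Real.norm_eq_abs] using hshift.abs)
      _ ≤ ∑' n : ℕ, (1 : ℝ) / ((n : ℝ) + (N : ℝ) + 1) ^ 2 :=
          Summable.tsum_le_tsum hb hshift.abs hgsum
      _ ≤ 1 / ((N : ℝ) + 1) + 1 / ((N : ℝ) + 1) ^ 2 := tail_sq N
  have h1 : 1 / ((N : ℝ) + 1) ≤ 1 / X := one_div_le_one_div_of_le hX0 hXlt.le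
  have h2 : 1 / ((N : ℝ) + 1) ^ 2 ≤ 1 / X ^ 2 := by
    apply one_div_le_one_div_of_le (by positivity)
    nlinarith
  have habs := (abs_le.mp htail).2
  rw [hfin]
  linarith [hsplit, hge, habs, h1, h2]
end
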